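/- Let d ≥ 1 and let (U(s,t))_{s≤t} be a Feller evolution system on C₀(ℝ^d). Then for every t ≥ 0, f ∈ C₀(ℝ × ℝ^d) and ε > 0 there exists R > 0 such that |(U(s,s+t) f(s+t,·))(x)| < ε whenever (s,x) ∈ ℝ × ℝ^d satisfies s² + |x|² > R²; i.e., the function (s,x) ↦ (U(s,s+t) f(s+t,·))(x) vanishes at infinity. -/

import Mathlib

/-!
The curve `s ↦ U(s,s+t) f(s+t,·)` in `C₀(ℝ^d)` is continuous, by strong continuity and
contractivity of `U` together with uniform continuity of `f`, and its norm tends to `0` as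
`|s| → ∞`, since `U` is a contraction and `f` vanishes at infinity. Any such curve is jointly
`C₀`: outside a compact set of times its norm is small, and over a compact set of times its
values form a compact subset of `C₀(ℝ^d)`, whose elements vanish at infinity uniformly.
-/

open Filter Topology
open scoped ZeroAtInfty

/-- `U` is a Feller evolution system on `C₀(ℝ^d)`: each `U(s,t)` (for `s ≤ t`) is a
positivity-preserving linear contraction of `C₀(ℝ^d)` into itself, `U(s,s) = id`,
`U(s,t) = U(s,r) ∘ U(r,t)` for `s ≤ r ≤ t`, and `(s,t) ↦ U(s,t)f` is jointly strongly
continuous on `{(s,t) : s ≤ t}`. -/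
def IsFellerEvolution {d : ℕ}
    (U : ℝ → ℝ → (EuclideanSpace ℝ (Fin d) →C₀ ℝ) →ₗ[ℝ] (EuclideanSpace ℝ (Fin d) →C₀ ℝ)) :
    Prop :=
  (∀ s t, s ≤ t → ∀ f, ‖U s t f‖ ≤ ‖f‖) ∧
  (∀ s t, s ≤ t → ∀ f, (∀ x, 0 ≤ f x) → ∀ x, 0 ≤ U s t f x) ∧
  (∀ s, U s s = LinearMap.id) ∧
  (∀ s r t, s ≤ r → r ≤ t → U s t = (U s r) ∘ₗ (U r t)) ∧
  (∀ (f : EuclideanSpace ℝ (Fin d) →C₀ ℝ) (v w : ℝ), v ≤ w →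
    Tendsto (fun p : ℝ × ℝ => ‖U p.1 p.2 f - U v w f‖)
      (𝓝[{p : ℝ × ℝ | p.1 ≤ p.2}] (v, w)) (𝓝 0))

/-- The time slice `f(r,·)` of `f ∈ C₀(ℝ × ℝ^d)`, as an element of `C₀(ℝ^d)`. -/
noncomputable def timeSlice {d : ℕ} (f : (ℝ × EuclideanSpace ℝ (Fin d)) →C₀ ℝ) (r : ℝ) :
    EuclideanSpace ℝ (Fin d) →C₀ ℝ where
  toFun x := f (r, x)
  continuous_toFun := f.continuous.comp (Continuous.prodMk_right r)
  zero_at_infty' := by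
    have h : IsClosedEmbedding (fun x : EuclideanSpace ℝ (Fin d) =>
        ((r, x) : ℝ × EuclideanSpace ℝ (Fin d))) := by
      refine ⟨isEmbedding_prodMkRight r, ?_⟩
      have hr : Set.range (fun x : EuclideanSpace ℝ (Fin d) =>
          ((r, x) : ℝ × EuclideanSpace ℝ (Fin d))) = {r} ×ˢ Set.univ := by
        ext p; simp [Set.mem_prod, eq_comm, Prod.ext_iff]
      rw [hr]
      exact isClosed_singleton.prod isClosed_univ
    exact f.zero_at_infty'.comp h.tendsto_cocompact

/-- The space-time semigroup `T(t)f(s,x) := (U(s,s+t) f(s+t,·))(x)`, as a plain function on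
`ℝ × ℝ^d`. -/
noncomputable def spaceTime {d : ℕ}
    (U : ℝ → ℝ → (EuclideanSpace ℝ (Fin d) →C₀ ℝ) →ₗ[ℝ] (EuclideanSpace ℝ (Fin d) →C₀ ℝ))
    (t : ℝ) (f : (ℝ × EuclideanSpace ℝ (Fin d)) →C₀ ℝ) :
    ℝ × EuclideanSpace ℝ (Fin d) → ℝ :=
  fun p => U p.1 (p.1 + t) (timeSlice f (p.1 + t)) p.2

namespace ZeroAtInftyContinuousMap

variable {X Y β : Type*} [TopologicalSpace X] [TopologicalSpace Y] [SeminormedAddCommGroup β]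

theorem norm_apply_le (h : C₀(Y, β)) (y : Y) : ‖h y‖ ≤ ‖h‖ :=
  h.toBCF.norm_coe_le_norm y

theorem norm_le {h : C₀(Y, β)} {C : ℝ} (hC : 0 ≤ C) : ‖h‖ ≤ C ↔ ∀ y, ‖h y‖ ≤ C :=
  BoundedContinuousFunction.norm_le hC

theorem eventually_cocompact_forall_norm_lt_of_isCompact {S : Set C₀(Y, β)} (hS : IsCompact S)
    {ε : ℝ} (hε : 0 < ε) : ∀ᶠ y in cocompact Y, ∀ h ∈ S, ‖h y‖ < ε := by
  have hnear : ∀ h ∈ S, {p : Y × C₀(Y, β) | ‖p.2 p.1‖ < ε} ∈ cocompact Y ×ˢ 𝓝 h := by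
    intro h _
    have hsmall : ∀ᶠ y in cocompact Y, ‖h y‖ < ε / 2 :=
      (tendsto_zero_iff_norm_tendsto_zero.1 (zero_at_infty h)).eventually
        (gt_mem_nhds (half_pos hε))
    filter_upwards [prod_mem_prod hsmall (Metric.ball_mem_nhds h (half_pos hε))]
      with ⟨y, h'⟩ ⟨hy, hh'⟩
    calc ‖h' y‖ ≤ ‖h' y - h y‖ + ‖h y‖ := norm_le_norm_sub_add _ _
      _ ≤ ‖h' - h‖ + ‖h y‖ := by gcongr; exact norm_apply_le (h' - h) y
      _ < ε / 2 + ε / 2 := add_lt_add (by rwa [← dist_eq_norm]) hy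
      _ = ε := add_halves ε
  have hunif : ∀ᶠ p in cocompact Y ×ˢ 𝓝ˢ S, ‖p.2 p.1‖ < ε := hS.mem_prod_nhdsSet_of_forall hnear
  exact hunif.curry.mono fun _ hy => hy.self_of_nhdsSet

theorem tendsto_uncurry_cocompact {g : X → C₀(Y, β)} (hg : Continuous g)
    (hg₀ : Tendsto g (cocompact X) (𝓝 0)) :
    Tendsto (fun p : X × Y => g p.1 p.2) (cocompact (X × Y)) (𝓝 0) := by
  rw [← coprod_cocompact]
  refine tendsto_sup.2 ⟨?_, ?_⟩
  · refine squeeze_zero_norm (fun p => norm_apply_le (g p.1) p.2) ?_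
    exact (tendsto_norm_zero.comp hg₀).comp tendsto_comap
  · refine Metric.tendsto_nhds.2 fun ε hε => ?_
    obtain ⟨K, hK, hKc⟩ := mem_cocompact.1 (hg₀.eventually (Metric.ball_mem_nhds 0 hε))
    filter_upwards [tendsto_comap.eventually
      (eventually_cocompact_forall_norm_lt_of_isCompact (hK.image hg) hε)] with p hp
    rw [dist_zero_right]
    by_cases hpK : p.1 ∈ K
    · exact hp _ (Set.mem_image_of_mem g hpK)
    · exact (norm_apply_le _ _).trans_lt (mem_ball_zero_iff.1 (hKc hpK))

end ZeroAtInftyContinuousMap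

@[simp]
theorem timeSlice_apply {d : ℕ} (f : (ℝ × EuclideanSpace ℝ (Fin d)) →C₀ ℝ) (r : ℝ)
    (x : EuclideanSpace ℝ (Fin d)) : timeSlice f r x = f (r, x) :=
  rfl

theorem uniformContinuous_timeSlice {d : ℕ} (f : (ℝ × EuclideanSpace ℝ (Fin d)) →C₀ ℝ) :
    UniformContinuous (timeSlice f) := by
  refine Metric.uniformContinuous_iff.2 fun ε hε => ?_
  obtain ⟨δ, hδ, hf⟩ := Metric.uniformContinuous_iff.1
    (ZeroAtInftyContinuousMap.uniformContinuous f) (ε / 2) (half_pos hε)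
  refine ⟨δ, hδ, fun {r r'} hr => ?_⟩
  rw [dist_eq_norm]
  refine lt_of_le_of_lt ((ZeroAtInftyContinuousMap.norm_le (half_pos hε).le).2 fun x => ?_)
    (half_lt_self hε)
  have hclose := hf (a := (r, x)) (b := (r', x)) (by simpa [Prod.dist_eq] using hr)
  simpa [Real.dist_eq] using hclose.le

theorem tendsto_timeSlice_cocompact {d : ℕ} (f : (ℝ × EuclideanSpace ℝ (Fin d)) →C₀ ℝ) :
    Tendsto (timeSlice f) (cocompact ℝ) (𝓝 0) := by
  refine Metric.tendsto_nhds.2 fun ε hε => ?_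
  obtain ⟨K, hK, hKc⟩ := mem_cocompact.1 ((ZeroAtInftyContinuousMapClass.zero_at_infty f).eventually
    (Metric.ball_mem_nhds 0 (half_pos hε)))
  refine mem_cocompact.2 ⟨Prod.fst '' K, hK.image continuous_fst, fun r hr => ?_⟩
  have hsmall : ‖timeSlice f r‖ ≤ ε / 2 := (ZeroAtInftyContinuousMap.norm_le (half_pos hε).le).2
    fun x => le_of_lt (by simpa using hKc fun hx => hr ⟨(r, x), hx, rfl⟩)
  rw [Set.mem_ofPred_eq, dist_zero_right]
  exact hsmall.trans_lt (half_lt_self hε)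

noncomputable def spaceTimeSection {d : ℕ}
    (U : ℝ → ℝ → (EuclideanSpace ℝ (Fin d) →C₀ ℝ) →ₗ[ℝ] (EuclideanSpace ℝ (Fin d) →C₀ ℝ))
    (t : ℝ) (f : (ℝ × EuclideanSpace ℝ (Fin d)) →C₀ ℝ) (s : ℝ) :
    EuclideanSpace ℝ (Fin d) →C₀ ℝ :=
  U s (s + t) (timeSlice f (s + t))

namespace IsFellerEvolution

variable {d : ℕ}
  {U : ℝ → ℝ → (EuclideanSpace ℝ (Fin d) →C₀ ℝ) →ₗ[ℝ] (EuclideanSpace ℝ (Fin d) →C₀ ℝ)}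

theorem tendsto_apply (hU : IsFellerEvolution U) {α : Type*} {l : Filter α} {p : α → ℝ × ℝ}
    {g : α → EuclideanSpace ℝ (Fin d) →C₀ ℝ} {v w : ℝ} {g₀ : EuclideanSpace ℝ (Fin d) →C₀ ℝ}
    (hvw : v ≤ w) (hp : Tendsto p l (𝓝[{q | q.1 ≤ q.2}] (v, w))) (hg : Tendsto g l (𝓝 g₀)) :
    Tendsto (fun a => U (p a).1 (p a).2 (g a)) l (𝓝 (U v w g₀)) := by
  obtain ⟨hcontr, -, -, -, hcont⟩ := hU
  rw [tendsto_iff_norm_sub_tendsto_zero] at hg ⊢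
  have hbound : ∀ᶠ a in l, ‖U (p a).1 (p a).2 (g a) - U v w g₀‖ ≤
      ‖g a - g₀‖ + ‖U (p a).1 (p a).2 g₀ - U v w g₀‖ := by
    filter_upwards [hp.eventually self_mem_nhdsWithin] with a ha
    calc ‖U (p a).1 (p a).2 (g a) - U v w g₀‖
        ≤ ‖U (p a).1 (p a).2 (g a - g₀)‖ + ‖U (p a).1 (p a).2 g₀ - U v w g₀‖ := by
          rw [map_sub]; exact norm_sub_le_norm_sub_add_norm_sub _ _ _
      _ ≤ ‖g a - g₀‖ + ‖U (p a).1 (p a).2 g₀ - U v w g₀‖ := by grw [hcontr _ _ ha]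
  have hlim : Tendsto (fun a => ‖g a - g₀‖ + ‖U (p a).1 (p a).2 g₀ - U v w g₀‖) l (𝓝 0) := by
    simpa using hg.add ((hcont g₀ v w hvw).comp hp)
  exact squeeze_zero' (Eventually.of_forall fun _ => norm_nonneg _) hbound hlim

theorem continuous_spaceTimeSection (hU : IsFellerEvolution U) {t : ℝ} (ht : 0 ≤ t)
    (f : (ℝ × EuclideanSpace ℝ (Fin d)) →C₀ ℝ) : Continuous (spaceTimeSection U t f) := by
  refine continuous_iff_continuousAt.2 fun s => ?_
  have hdiag : Tendsto (fun s' : ℝ => (s', s' + t)) (𝓝 s) (𝓝[{q | q.1 ≤ q.2}] (s, s + t)) :=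
    tendsto_nhdsWithin_iff.2 ⟨(continuous_id.prodMk (continuous_add_const t)).tendsto s,
      Eventually.of_forall fun s' => show s' ≤ s' + t by linarith⟩
  exact hU.tendsto_apply (by linarith) hdiag
    (((uniformContinuous_timeSlice f).continuous.comp (continuous_add_const t)).tendsto s)

theorem tendsto_spaceTimeSection_cocompact (hU : IsFellerEvolution U) {t : ℝ} (ht : 0 ≤ t)
    (f : (ℝ × EuclideanSpace ℝ (Fin d)) →C₀ ℝ) :
    Tendsto (spaceTimeSection U t f) (cocompact ℝ) (𝓝 0) :=
  squeeze_zero_norm (fun s => hU.1 s (s + t) (by linarith) _)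
    (tendsto_norm_zero.comp <| (tendsto_timeSlice_cocompact f).comp
      (Homeomorph.addRight t).isClosedEmbedding.tendsto_cocompact)

end IsFellerEvolution

theorem exists_radius_abs_lt_of_tendsto_cobounded {E : Type*} [SeminormedAddCommGroup E]
    {F : ℝ × E → ℝ}
    (hF : Tendsto F (Bornology.cobounded (ℝ × E)) (𝓝 0)) {ε : ℝ} (hε : 0 < ε) :
    ∃ R > (0 : ℝ), ∀ s x, R ^ 2 < s ^ 2 + ‖x‖ ^ 2 → |F (s, x)| < ε := by
  obtain ⟨M, -, hM⟩ := hasBasis_cobounded_norm.tendsto_left_iff.1 hF _ (Metric.ball_mem_nhds 0 hε)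
  refine ⟨2 * max M 1, by positivity, fun s x hsx => ?_⟩
  have hfar : M ≤ ‖(s, x)‖ := by
    by_contra! hnear
    have hs : |s| < M := (norm_fst_le (s, x)).trans_lt hnear
    have hx : ‖x‖ < M := (norm_snd_le (s, x)).trans_lt hnear
    nlinarith [abs_nonneg s, norm_nonneg x, sq_abs s, le_max_left M 1, le_max_right M 1]
  simpa [Real.dist_eq] using hM hfar

theorem spaceTime_zero_at_infty_general
    (d : ℕ)
    (U : ℝ → ℝ → (EuclideanSpace ℝ (Fin d) →C₀ ℝ) →ₗ[ℝ] (EuclideanSpace ℝ (Fin d) →C₀ ℝ))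
    (hU : IsFellerEvolution U)
    (t : ℝ) (ht : 0 ≤ t) (f : (ℝ × EuclideanSpace ℝ (Fin d)) →C₀ ℝ) :
    ∀ ε > (0:ℝ), ∃ R > (0:ℝ), ∀ (s : ℝ) (x : EuclideanSpace ℝ (Fin d)),
      R ^ 2 < s ^ 2 + ‖x‖ ^ 2 → |spaceTime U t f (s, x)| < ε := by
  have hjoint : Tendsto (spaceTime U t f) (cocompact _) (𝓝 0) :=
    ZeroAtInftyContinuousMap.tendsto_uncurry_cocompact (hU.continuous_spaceTimeSection ht f)
      (hU.tendsto_spaceTimeSection_cocompact ht f)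
  intro ε hε
  refine exists_radius_abs_lt_of_tendsto_cobounded ?_ hε
  rwa [Metric.cobounded_eq_cocompact]

/-- If `U` is a Feller evolution system on `C₀(ℝ^d)`, then for every
`t ≥ 0` and `f ∈ C₀(ℝ × ℝ^d)` the function `(s,x) ↦ (U(s,s+t) f(s+t,·))(x)` vanishes at
infinity: for every `ε > 0` there is `R > 0` with `|T(t)f(s,x)| < ε` whenever
`s² + |x|² > R²`. -/
theorem spaceTime_zero_at_infty
    (d : ℕ) (hd : 1 ≤ d)
    (U : ℝ → ℝ → (EuclideanSpace ℝ (Fin d) →C₀ ℝ) →ₗ[ℝ] (EuclideanSpace ℝ (Fin d) →C₀ ℝ))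
    (hU : IsFellerEvolution U)
    (t : ℝ) (ht : 0 ≤ t) (f : (ℝ × EuclideanSpace ℝ (Fin d)) →C₀ ℝ) :
    ∀ ε > (0:ℝ), ∃ R > (0:ℝ), ∀ (s : ℝ) (x : EuclideanSpace ℝ (Fin d)),
      R ^ 2 < s ^ 2 + ‖x‖ ^ 2 → |spaceTime U t f (s, x)| < ε :=
  spaceTime_zero_at_infty_general d U hU t ht f
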